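/- Let G be a graph with vertex set {v₀, v₁, …, v_n} such that for each i ∈ [n], the set N(v_i) ∩ {v_j : 0 ≤ j ≤ i−1} is nonempty and the subgraph of G induced by this set is connected. Then G is DP-good. -/

import Mathlib

open SimpleGraph

attribute [local instance] Classical.propDecidable

universe u
variable {V : Type u}

/-- `H` (on vertex set `V × Fin m`) is an `m`-fold cover of `G`. -/
def IsCover (G : SimpleGraph V) (m : ℕ) (H : SimpleGraph (V × Fin m)) : Prop :=
  (∀ (u : V) (i j : Fin m), i ≠ j → H.Adj (u, i) (u, j)) ∧
  (∀ (u v : V) (i j : Fin m), u ≠ v → H.Adj (u, i) (v, j) → G.Adj u v) ∧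
  (∀ (u v : V) (i j j' : Fin m), u ≠ v → H.Adj (u, i) (v, j) → H.Adj (u, i) (v, j') → j = j')

/-- A full cover: every matching between fibers over an edge is perfect. -/
def IsFullCover (G : SimpleGraph V) (m : ℕ) (H : SimpleGraph (V × Fin m)) : Prop :=
  IsCover G m H ∧ ∀ u v : V, G.Adj u v → ∀ i : Fin m, ∃ j : Fin m, H.Adj (u, i) (v, j)

/-- Number of ℋ-colorings (independent transversals) of a cover graph `H`. -/
noncomputable def coverCount {m : ℕ} (H : SimpleGraph (V × Fin m)) : ℕ :=
  Nat.card {f : V → Fin m // ∀ u v : V, ¬ H.Adj (u, f u) (v, f v)}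

/-- The DP color function. -/
noncomputable def PDP (G : SimpleGraph V) (m : ℕ) : ℕ :=
  sInf {n | ∃ H : SimpleGraph (V × Fin m), IsCover G m H ∧ n = coverCount H}

/-- Number of proper m-colorings, i.e. the chromatic polynomial evaluated at m. -/
noncomputable def properCount (G : SimpleGraph V) (m : ℕ) : ℕ :=
  Nat.card {f : V → Fin m // ∀ u v : V, G.Adj u v → f u ≠ f v}

/-- Girth of an edge: length of a shortest cycle through `e` (∞ if none). -/
noncomputable def edgeGirth (G : SimpleGraph V) (e : Sym2 V) : ℕ∞ :=
  ⨅ (a : V) (p : G.Walk a a) (_ : p.IsCycle) (_ : e ∈ p.edges), (p.length : ℕ∞)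

/-- Girth of an edge set `E₀`: length of a shortest cycle meeting `E₀` in an odd
number of edges (∞ if none). -/
noncomputable def setGirth (G : SimpleGraph V) (E₀ : Set (Sym2 V)) : ℕ∞ :=
  ⨅ (a : V) (p : G.Walk a a) (_ : p.IsCycle)
    (_ : Odd (p.edges.countP (fun e => e ∈ E₀))), (p.length : ℕ∞)

/-- The canonical cover graph `H_{G,m}`. -/
def canonicalCover (G : SimpleGraph V) (m : ℕ) : SimpleGraph (V × Fin m) where
  Adj x y := (x.1 = y.1 ∧ x.2 ≠ y.2) ∨ (G.Adj x.1 y.1 ∧ x.2 = y.2)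
  symm := ⟨by
    rintro ⟨u, i⟩ ⟨v, j⟩ (⟨h1, h2⟩ | ⟨h1, h2⟩)
    · exact Or.inl ⟨h1.symm, h2.symm⟩
    · exact Or.inr ⟨h1.symm, h2.symm⟩⟩
  loopless := ⟨by rintro ⟨u, i⟩ (⟨h1, h2⟩ | ⟨h1, h2⟩) <;> simp_all⟩

/-- `D` is an orientation of the edge set `E₀`. -/
def IsOrientation (D : Set (V × V)) (E₀ : Set (Sym2 V)) : Prop :=
  (∀ x ∈ D, s(x.1, x.2) ∈ E₀) ∧
  ∀ u v : V, s(u, v) ∈ E₀ → ((u, v) ∈ D ↔ (v, u) ∉ D)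

/-- The directed edges `D` are balanced on the closed walk `p`. -/
noncomputable def BalancedOn {G : SimpleGraph V} (D : Set (V × V)) {a : V}
    (p : G.Walk a a) : Prop :=
  p.darts.countP (fun d => (d.fst, d.snd) ∈ D) =
    p.darts.countP (fun d => (d.snd, d.fst) ∈ D)

/-- A DP-good graph. -/
def DPGood [Fintype V] (G : SimpleGraph V) : Prop :=
  G.Connected ∧
  ∃ T : SimpleGraph V, T ≤ G ∧ T.IsTree ∧
    ∃ (q : ℕ) (e : Fin q → Sym2 V),
      Function.Injective e ∧
      Set.range e = G.edgeSet \ T.edgeSet ∧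
      (∀ i j : Fin q, i ≤ j → edgeGirth G (e i) ≤ edgeGirth G (e j)) ∧
      ∀ i : Fin q, ∃ g : ℕ, Odd g ∧ edgeGirth G (e i) = (g : ℕ∞) ∧
        ∃ (a : V) (C : G.Walk a a), C.IsCycle ∧ e i ∈ C.edges ∧ C.length = g ∧
          ∀ f ∈ C.edges, f ∈ T.edgeSet ∪ {e j | j ≤ i}

/-!
Join every vertex `x` that is not the first one to a chosen earlier neighbour `p x`. Each vertex
then has exactly one earlier neighbour in this graph `T`, so `T` is a spanning tree. An edge `xy`
with `y < x` outside `T` lies in a triangle `xyz`: take `z` to be the neighbour of `y` on a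
shortest path from `y` to `p x` inside the connected graph induced by the earlier neighbours of
`x`. Rank `xy` by `x` and then by the distance from `p x` to `y` in that graph. Both other edges
of the triangle have smaller rank: `yz` has a smaller upper endpoint and `z` is closer to `p x`.
So when the non-tree edges are listed by increasing rank, each one has girth 3 and closes a
triangle made of tree edges and earlier edges.
-/

namespace SimpleGraph

theorem Reachable.exists_adj_dist_lt {G : SimpleGraph V} {u w : V} (h : G.Reachable u w)
    (hne : u ≠ w) : ∃ x, G.Adj w x ∧ G.dist u x < G.dist u w := by
  obtain ⟨p, -, hlen⟩ := h.symm.exists_path_of_dist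
  cases p with
  | nil => exact absurd rfl hne
  | cons hadj q =>
    refine ⟨_, hadj, ?_⟩
    rw [dist_comm, dist_comm (u := u)]
    have := dist_le q
    simp only [Walk.length_cons] at hlen
    omega

theorem isCycle_triangle {G : SimpleGraph V} {x y z : V} (hxy : G.Adj x y) (hyz : G.Adj y z)
    (hzx : G.Adj z x) : (Walk.cons hxy (.cons hyz (.cons hzx .nil))).IsCycle := by
  simp [Walk.cons_isCycle_iff, Walk.cons_isPath_iff, hxy.ne, hyz.ne, hzx.ne, hxy.ne.symm,
    hzx.ne.symm]

section LinearOrder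

variable [LinearOrder V] {G : SimpleGraph V}

theorem isAcyclic_of_unique_lower_adj
    (h : ∀ ⦃x y z⦄, G.Adj x y → G.Adj x z → y < x → z < x → y = z) : G.IsAcyclic := by
  intro a c hc
  set x := c.support.toFinset.max' ⟨a, by simp⟩
  have hx : x ∈ c.support := by simpa using c.support.toFinset.max'_mem ⟨a, by simp⟩
  have hle : ∀ y ∈ c.support, y ≤ x := fun y hy => c.support.toFinset.le_max' y (by simpa)
  have hc' := hc.rotate hx
  have lt_of_adj : ∀ y ∈ (c.rotate x hx).support, G.Adj x y → y < x := fun y hy hxy =>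
    lt_of_le_of_ne (hle y ((c.mem_support_rotate_iff x hx).1 hy)) hxy.ne.symm
  exact hc'.snd_ne_penultimate <| h (Walk.adj_snd hc'.not_nil)
    (Walk.adj_penultimate hc'.not_nil).symm
    (lt_of_adj _ (Walk.getVert_mem_support _ _) (Walk.adj_snd hc'.not_nil))
    (lt_of_adj _ (Walk.getVert_mem_support _ _) (Walk.adj_penultimate hc'.not_nil).symm)

theorem connected_of_exists_lower_adj [Finite V] [Nonempty V]
    (h : ∀ x, ¬IsMin x → ∃ y < x, G.Adj x y) : G.Connected := by
  obtain ⟨m, hm⟩ := Finite.exists_min (id : V → V)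
  have reach : ∀ x, G.Reachable x m := by
    intro x
    induction x using WellFoundedLT.induction with
    | _ x ih =>
      by_cases hx : IsMin x
      · rw [le_antisymm (hx (hm x)) (hm x)]; rfl
      · obtain ⟨y, hyx, hxy⟩ := h x hx
        exact hxy.reachable.trans (ih y hyx)
  exact ⟨fun x y => (reach x).trans (reach y).symm⟩

def parentGraph (p : V → V) : SimpleGraph V := fromRel fun x y => y = p x ∧ y < x

theorem eq_of_parentGraph_adj_of_lt {p : V → V} {x y : V} (hxy : (parentGraph p).Adj x y)
    (hyx : y < x) : y = p x := by
  obtain ⟨-, ⟨rfl, -⟩ | ⟨rfl, hxy⟩⟩ := hxy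
  · rfl
  · exact absurd hyx hxy.not_gt

theorem isTree_parentGraph [Finite V] [Nonempty V] {p : V → V}
    (hp : ∀ x, ¬IsMin x → p x < x) : (parentGraph p).IsTree :=
  ⟨connected_of_exists_lower_adj fun x hx =>
      ⟨p x, hp x hx, (hp x hx).ne', Or.inl ⟨rfl, hp x hx⟩⟩,
    isAcyclic_of_unique_lower_adj fun _ _ _ hxy hxz hyx hzx =>
      (eq_of_parentGraph_adj_of_lt hxy hyx).trans (eq_of_parentGraph_adj_of_lt hxz hzx).symm⟩

end LinearOrder

end SimpleGraph

theorem Set.Finite.exists_enumeration_rank_lt {α β : Type*} [LinearOrder β] {s : Set α}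
    (hs : s.Finite) (r : α → β) :
    ∃ (q : ℕ) (e : Fin q → α), Function.Injective e ∧ Set.range e = s ∧
      ∀ k, ∀ a ∈ s, r a < r (e k) → ∃ j < k, e j = a := by
  have := hs.fintype
  let ε : Fin (Fintype.card s) ≃ s := (Fintype.equivFin s).symm
  let σ := Tuple.sort fun k => r (ε k)
  let e : Fin (Fintype.card s) → α := fun k => ε (σ k)
  have he : ∀ a (ha : a ∈ s), e (σ.symm (ε.symm ⟨a, ha⟩)) = a := by simp [e]
  refine ⟨_, e, fun j k hjk => σ.injective (ε.injective (Subtype.ext hjk)), ?_, ?_⟩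
  · exact Set.Subset.antisymm (Set.range_subset_iff.2 fun k => (ε (σ k)).2)
      fun a ha => ⟨_, he a ha⟩
  · intro k a ha hlt
    refine ⟨_, ?_, he a ha⟩
    by_contra! hle
    have hmono : r (e k) ≤ r (e _) := Tuple.monotone_sort (fun k => r (ε k)) hle
    exact hmono.not_gt (by rwa [he a ha])

theorem edgeGirth_eq_three {G : SimpleGraph V} {x y z : V} (hxy : G.Adj x y) (hyz : G.Adj y z)
    (hzx : G.Adj z x) : edgeGirth G s(x, y) = 3 :=
  le_antisymm
    (iInf₂_le_of_le x _ <| iInf₂_le_of_le (isCycle_triangle hxy hyz hzx) (by simp) le_rfl)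
    (le_iInf₂ fun _ _ => le_iInf₂ fun hc _ => mod_cast hc.three_le_length)

namespace SimpleGraph

section LinearOrder

variable [LinearOrder V] (G : SimpleGraph V)

def lowerNeighborSet (x : V) : Set V := {y | G.Adj x y ∧ y < x}

noncomputable def lowerParent (x : V) : V :=
  if h : (G.lowerNeighborSet x).Nonempty then h.some else x

def lowerNeighborGraph (x : V) : SimpleGraph V :=
  (G.induce (G.lowerNeighborSet x)).map (Function.Embedding.subtype _)

noncomputable def edgeRank (e : Sym2 V) : Lex (V × ℕ) :=
  toLex (e.sup, (G.lowerNeighborGraph e.sup).dist (G.lowerParent e.sup) e.inf)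

variable {G}

theorem lowerParent_mem {x : V} (h : (G.lowerNeighborSet x).Nonempty) :
    G.lowerParent x ∈ G.lowerNeighborSet x := by
  rw [lowerParent, dif_pos h]
  exact h.some_mem

theorem parentGraph_lowerParent_le : parentGraph G.lowerParent ≤ G := by
  have adj_of_lt : ∀ x, G.lowerParent x < x → G.Adj x (G.lowerParent x) := fun x hx =>
    (lowerParent_mem <| by_contra fun h => by simp [lowerParent, h] at hx).1
  rintro x y ⟨-, ⟨rfl, hyx⟩ | ⟨rfl, hxy⟩⟩
  · exact adj_of_lt x hyx
  · exact (adj_of_lt y hxy).symm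

theorem edgeRank_mk_of_lt {x y : V} (h : y < x) :
    G.edgeRank s(x, y) = toLex (x, (G.lowerNeighborGraph x).dist (G.lowerParent x) y) := by
  simp [edgeRank, h.le]

theorem exists_triangle_edgeRank_lt {x y : V} (hx : (G.induce (G.lowerNeighborSet x)).Connected)
    (hxy : G.Adj x y) (hyx : y < x) (hne : y ≠ G.lowerParent x) :
    ∃ z, G.Adj y z ∧ G.Adj z x ∧
      G.edgeRank s(y, z) < G.edgeRank s(x, y) ∧ G.edgeRank s(z, x) < G.edgeRank s(x, y) := by
  have hy : y ∈ G.lowerNeighborSet x := ⟨hxy, hyx⟩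
  have hp := lowerParent_mem ⟨y, hy⟩
  have hreach : (G.lowerNeighborGraph x).Reachable (G.lowerParent x) y :=
    (hx ⟨_, hp⟩ ⟨y, hy⟩).map (Embedding.map _ _).toHom
  obtain ⟨z, hadj, hdist⟩ := hreach.exists_adj_dist_lt hne.symm
  obtain ⟨y', ⟨z, hz⟩, hyz, rfl, rfl⟩ := (map_adj _ _ _ _).1 hadj
  refine ⟨z, hyz, hz.1.symm, ?_, ?_⟩
  · rw [edgeRank_mk_of_lt hyx]
    exact Prod.Lex.toLex_lt_toLex.2 (Or.inl (sup_lt_iff.2 ⟨hyx, hz.2⟩))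
  · rw [Sym2.eq_swap, edgeRank_mk_of_lt hz.2, edgeRank_mk_of_lt hyx]
    exact Prod.Lex.toLex_lt_toLex.2 (Or.inr ⟨rfl, hdist⟩)

theorem exists_triangle_of_mem_edgeSet_of_notMem
    (hG : ∀ x, ¬IsMin x → (G.induce (G.lowerNeighborSet x)).Connected) {e : Sym2 V}
    (he : e ∈ G.edgeSet) (heT : e ∉ (parentGraph G.lowerParent).edgeSet) :
    ∃ x y z, e = s(x, y) ∧ G.Adj x y ∧ G.Adj y z ∧ G.Adj z x ∧
      G.edgeRank s(y, z) < G.edgeRank e ∧ G.edgeRank s(z, x) < G.edgeRank e := by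
  induction e using Sym2.ind with
  | _ a b =>
    wlog hba : b < a generalizing a b
    · rw [Sym2.eq_swap] at he heT ⊢
      exact this b a he heT (lt_of_le_of_ne (not_lt.1 hba) (G.ne_of_adj he).symm)
    have hne : b ≠ G.lowerParent a := fun h => heT ⟨hba.ne', Or.inl ⟨h, hba⟩⟩
    obtain ⟨z, hbz, hza, hlt⟩ :=
      exists_triangle_edgeRank_lt (hG a (not_isMin_of_lt hba)) he hba hne
    exact ⟨a, b, z, rfl, he, hbz, hza, hlt⟩

end LinearOrder

theorem dpGood_of_connected_induce_lowerNeighborSet [Fintype V] [LinearOrder V] [Nonempty V]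
    {G : SimpleGraph V} (hG : ∀ x, ¬IsMin x → (G.induce (G.lowerNeighborSet x)).Connected) :
    DPGood G := by
  set T := parentGraph G.lowerParent
  have hT : T.IsTree := isTree_parentGraph fun x hx =>
    (lowerParent_mem (Set.nonempty_coe_sort.1 (hG x hx).nonempty)).2
  have hTG : T ≤ G := parentGraph_lowerParent_le
  obtain ⟨q, e, he_inj, he_range, he_rank⟩ :=
    (G.edgeSet \ T.edgeSet).toFinite.exists_enumeration_rank_lt G.edgeRank
  have he : ∀ k, e k ∈ G.edgeSet \ T.edgeSet := fun k => he_range ▸ ⟨k, rfl⟩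
  have triangle := fun k =>
    exists_triangle_of_mem_edgeSet_of_notMem hG (he k).1 (he k).2
  have hgirth : ∀ k, edgeGirth G (e k) = 3 := fun k => by
    obtain ⟨x, y, z, hk, hxy, hyz, hzx, -⟩ := triangle k
    rw [hk]
    exact edgeGirth_eq_three hxy hyz hzx
  refine ⟨hT.connected.mono hTG, T, hTG, hT, q, e, he_inj, he_range,
    fun i j _ => by rw [hgirth i, hgirth j], fun k => ?_⟩
  obtain ⟨x, y, z, hk, hxy, hyz, hzx, hyz_lt, hzx_lt⟩ := triangle k
  refine ⟨3, by decide, hgirth k, x, _, isCycle_triangle hxy hyz hzx, by simp [hk], rfl, ?_⟩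
  have of_lt : ∀ f ∈ G.edgeSet, G.edgeRank f < G.edgeRank (e k) →
      f ∈ T.edgeSet ∪ {e j | j ≤ k} := fun f hf hlt => by
    by_cases hfT : f ∈ T.edgeSet
    · exact Or.inl hfT
    · obtain ⟨j, hjk, rfl⟩ := he_rank k f ⟨hf, hfT⟩ hlt
      exact Or.inr ⟨j, hjk.le, rfl⟩
  simp only [Walk.edges_cons, Walk.edges_nil, List.mem_cons, List.not_mem_nil, or_false]
  rintro f (rfl | rfl | rfl)
  · exact Or.inr ⟨k, le_rfl, hk⟩
  · exact of_lt _ hyz hyz_lt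
  · exact of_lt _ hzx hzx_lt

end SimpleGraph

theorem dpGood_of_ordering_general {V : Type} [Fintype V]
    (G : SimpleGraph V) (n : ℕ) (v : Fin (n + 1) → V) (hv : Function.Bijective v)
    (h : ∀ i : Fin (n + 1), 0 < i.val →
      ({x | G.Adj (v i) x ∧ ∃ j : Fin (n + 1), j < i ∧ x = v j}.Nonempty ∧
       (G.induce {x | G.Adj (v i) x ∧ ∃ j : Fin (n + 1), j < i ∧ x = v j}).Connected)) :
    DPGood G := by
  let σ := Equiv.ofBijective v hv
  let : LinearOrder V := LinearOrder.lift' σ.symm σ.symm.injective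
  have : Nonempty V := ⟨v 0⟩
  refine dpGood_of_connected_induce_lowerNeighborSet fun x hx => ?_
  obtain ⟨i, rfl⟩ := hv.2 x
  have hi : 0 < i.val := by
    refine Nat.pos_of_ne_zero fun hi0 => hx fun b _ => ?_
    obtain rfl : i = 0 := Fin.ext hi0
    show σ.symm (v 0) ≤ σ.symm b
    simp [σ]
  have hS : G.lowerNeighborSet (v i) = {x | G.Adj (v i) x ∧ ∃ j, j < i ∧ x = v j} := by
    ext y
    refine ⟨fun ⟨hadj, hlt⟩ => ⟨hadj, σ.symm y, ?_, (σ.apply_symm_apply y).symm⟩, ?_⟩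
    · simpa [σ] using (show σ.symm y < σ.symm (v i) from hlt)
    · rintro ⟨hadj, j, hj, rfl⟩
      exact ⟨hadj, show σ.symm (v j) < σ.symm (v i) by simpa [σ] using hj⟩
  rw [hS]
  exact (h i hi).2

/-- if the vertices of `G` can be ordered `v₀,…,v_n` so that each `v_i`
(`i ≥ 1`) has a neighbour among the earlier vertices and the subgraph induced by these
earlier neighbours is connected, then `G` is DP-good. -/
theorem dpGood_of_ordering {V : Type} [Fintype V] [DecidableEq V]
    (G : SimpleGraph V) (n : ℕ) (v : Fin (n + 1) → V) (hv : Function.Bijective v)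
    (h : ∀ i : Fin (n + 1), 0 < i.val →
      ({x | G.Adj (v i) x ∧ ∃ j : Fin (n + 1), j < i ∧ x = v j}.Nonempty ∧
       (G.induce {x | G.Adj (v i) x ∧ ∃ j : Fin (n + 1), j < i ∧ x = v j}).Connected)) :
    DPGood G :=
  dpGood_of_ordering_general G n v hv h
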